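/- Let k be a natural number. Suppose ∏_{i∈I} R^∞_i ≠ ∅ and that for every player j the induction hypothesis holds: R^k_j|_{S_j} = S_j^{k+1}. Then for every player i, the projection of R^{k+1}_i to S_i is contained in S_i^{k+2}. -/

import Mathlib

/-! A type in `R^{k+1}_i` deems possible exactly the profiles of `R^k_{-i}`, whose strategy
components range, by the induction hypothesis, over all of `S^{k+1}_{-i}`. Being rational, the
type's strategy is a best reply to each of these profiles, so no mixed strategy can do strictly
better against any of them: the strategy is admissible with respect to `S^{k+1}`. -/

open Finset

section StrategicBeliefModel

variable {I : Type} [Fintype I] [DecidableEq I]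
variable (S : I → Type) [∀ i, Fintype (S i)]
variable (T : I → Type)
variable (pay : ∀ i : I, (∀ j : I, S j) → ℝ)
variable (P : ∀ i : I, T i → Set ((∀ j : {j : I // j ≠ i}, S j.1) × (∀ j : {j : I // j ≠ i}, T j.1)))

/-- Combine player `i`'s strategy `si` with a profile `sm` of the other players'
strategies into a full strategy profile. -/
def combine (i : I) (si : S i) (sm : ∀ j : {j : I // j ≠ i}, S j.1) : ∀ j, S j :=
  fun j => if h : j = i then cast (congrArg S h.symm) si else sm ⟨j, h⟩

/-- Player `i`'s payoff when playing `si` against the others' profile `sm`. -/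
def payoffAgainst (i : I) (si : S i) (sm : ∀ j : {j : I // j ≠ i}, S j.1) : ℝ :=
  pay i (combine S i si sm)

/-- Projection of `P i ti` (a set of strategy–type profiles of the opponents)
to the opponents' strategy profiles: `P_i[t_i]|_{S_{-i}}`. -/
def projPS (i : I) (ti : T i) : Set (∀ j : {j : I // j ≠ i}, S j.1) :=
  {sm | ∃ tm, (sm, tm) ∈ P i ti}

/-- The pair `(si, ti)` is rational: `si` is a best reply against every
opponents' strategy profile deemed possible by `ti`. -/
def rationalPair (i : I) (si : S i) (ti : T i) : Prop :=
  ∀ s : S i, ∀ sm ∈ projPS S T P i ti,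
    payoffAgainst S pay i si sm ≥ payoffAgainst S pay i s sm

/-- The sets `R^m_i` (rationality and `m`-th order assumption of rationality). -/
def Rlev : ℕ → ∀ i : I, Set (S i × T i)
  | 0, i => {p | rationalPair S T pay P i p.1 p.2}
  | (m+1), i =>
      Rlev m i ∩
        {p | P i p.2 = {q | ∀ j : {j : I // j ≠ i}, (q.1 j, q.2 j) ∈ Rlev m j.1}}

/-- `R^∞_i = ⋂_m R^m_i`. -/
def Rinf (i : I) : Set (S i × T i) := ⋂ m, Rlev S T pay P m i

/-- `si` is admissible with respect to the product set `SBar × SBarm`: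
it belongs to `SBar` and no mixed strategy supported on `SBar` weakly dominates
it over `SBarm`. -/
def admissible (i : I) (SBar : Set (S i)) (SBarm : Set (∀ j : {j : I // j ≠ i}, S j.1))
    (si : S i) : Prop :=
  si ∈ SBar ∧
    ¬ ∃ σ : S i → ℝ,
        (∀ s, 0 ≤ σ s) ∧ (∀ s, σ s ≠ 0 → s ∈ SBar) ∧ (∑ s, σ s) = 1 ∧
        (∀ sm ∈ SBarm,
          (∑ s, σ s * payoffAgainst S pay i s sm) ≥ payoffAgainst S pay i si sm) ∧
        (∃ sm ∈ SBarm,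
          (∑ s, σ s * payoffAgainst S pay i s sm) > payoffAgainst S pay i si sm)

/-- The sets `S_i^m` of `m`-admissible strategies. -/
def Slev : ℕ → ∀ i : I, Set (S i)
  | 0, _ => Set.univ
  | (m+1), i =>
      {si | si ∈ Slev m i ∧
        admissible S pay i (Slev m i) {sm | ∀ j : {j : I // j ≠ i}, sm j ∈ Slev m j.1} si}

/-- `S_i^∞ = ⋂_m S_i^m`, the iteratively admissible strategies. -/
def Sinf (i : I) : Set (S i) := ⋂ m, Slev S pay m i

/-- The model is rationality-complete. -/
def RatComplete : Prop :=
  ∀ (i : I) (SBar : Set (S i)) (SBarm : Set (∀ j : {j : I // j ≠ i}, S j.1)) (sstar : S i),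
    admissible S pay i SBar SBarm sstar →
    ∃ ti : T i, ∀ si ∈ SBar, ∀ sm ∈ projPS S T P i ti, sm ∈ SBarm →
      payoffAgainst S pay i sstar sm ≥ payoffAgainst S pay i si sm

/-- `t_j ∈ P^1_i[t_i]` : one-step unfolding. -/
def PReachOne (i j : I) (ti : T i) (tj : T j) : Prop :=
  ∃ h : j ≠ i, ∃ p ∈ P i ti, p.2 ⟨j, h⟩ = tj

/-- `t_j ∈ P^m_i[t_i]` : `m`-step unfolding (trivial at `m = 0`). -/
def PReach : ℕ → ∀ i j : I, T i → T j → Prop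
  | 0, _, _, _, _ => True
  | 1, i, j, ti, tj => PReachOne S T P i j ti tj
  | (m+2), i, j, ti, tj =>
      ∃ (k : I) (tk : T k), PReach (m+1) i k ti tk ∧ PReachOne S T P k j tk tj

/-- `(γ, m)` is a condition of the forcing poset `𝒫`. -/
def inP (γ : ∀ i, S i × T i) (m : ℕ) : Prop :=
  (∀ i, rationalPair S T pay P i (γ i).1 (γ i).2) ∧
    ∀ i j, PReach S T P m i j (γ i).2 (γ j).2

/-- `(γ, m)` is a condition of `δ`. -/
def inDelta (γ : ∀ i, S i × T i) (m : ℕ) : Prop :=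
  ∀ i, γ i ∈ Rlev S T pay P m i

/-- `(γ, m)` is a condition of the generic set `𝒢`. -/
def inG (γ : ∀ i, S i × T i) (m : ℕ) : Prop :=
  inDelta S T pay P γ m ∧ ∀ (k : ℕ) (i : I), γ i ∈ Rlev S T pay P k i

section BestReplies

variable {S T pay P}

theorem sum_weight_mul_le_of_le {α : Type*} [Fintype α] {σ f : α → ℝ} {c : ℝ}
    (hσ : ∀ a, 0 ≤ σ a) (hσ1 : ∑ a, σ a = 1) (hf : ∀ a, f a ≤ c) : ∑ a, σ a * f a ≤ c :=
  calc ∑ a, σ a * f a ≤ ∑ a, σ a * c := by gcongr with a; exacts [hσ a, hf a]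
    _ = c := by rw [← Finset.sum_mul, hσ1, one_mul]

omit [Fintype I] in
theorem admissible_of_forall_bestReply {i : I} {SBar : Set (S i)}
    {SBarm : Set (∀ j : {j : I // j ≠ i}, S j.1)} {si : S i} (hsi : si ∈ SBar)
    (hbest : ∀ sm ∈ SBarm, ∀ s, payoffAgainst S pay i s sm ≤ payoffAgainst S pay i si sm) :
    admissible S pay i SBar SBarm si := by
  refine ⟨hsi, ?_⟩
  rintro ⟨σ, hσ, -, hσ1, -, sm, hsm, hlt⟩
  exact (sum_weight_mul_le_of_le hσ hσ1 (hbest sm hsm)).not_gt hlt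

omit [Fintype I] [∀ i, Fintype (S i)] in
theorem rationalPair_of_mem_Rlev {m : ℕ} {i : I} {p : S i × T i}
    (hp : p ∈ Rlev S T pay P m i) : rationalPair S T pay P i p.1 p.2 := by
  induction m with
  | zero => exact hp
  | succ m ih => exact ih hp.1

omit [Fintype I] [∀ i, Fintype (S i)] in
theorem mem_projPS_of_mem_Rlev_succ {m : ℕ} {i : I} {p : S i × T i}
    (hp : p ∈ Rlev S T pay P (m + 1) i) {sm : ∀ j : {j : I // j ≠ i}, S j.1}
    (hsm : ∀ j, sm j ∈ Prod.fst '' Rlev S T pay P m j.1) : sm ∈ projPS S T P i p.2 := by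
  choose q hq hq1 using hsm
  refine ⟨fun j => (q j).2, ?_⟩
  rw [hp.2]
  intro j
  simpa [← hq1 j] using hq j

end BestReplies

theorem stmt4
    (k : ℕ)
    (hIH : ∀ j : I, Prod.fst '' Rlev S T pay P k j = Slev S pay (k + 1) j) :
    ∀ i : I, Prod.fst '' Rlev S T pay P (k + 1) i ⊆ Slev S pay (k + 2) i := by
  rintro i _ ⟨p, hp, rfl⟩
  have hsi : p.1 ∈ Slev S pay (k + 1) i := hIH i ▸ ⟨p, hp.1, rfl⟩
  refine ⟨hsi, admissible_of_forall_bestReply hsi fun sm hsm s => ?_⟩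
  have hsm_proj : sm ∈ projPS S T P i p.2 :=
    mem_projPS_of_mem_Rlev_succ hp fun j => (hIH j.1).symm ▸ hsm j
  exact rationalPair_of_mem_Rlev hp s sm hsm_proj

end StrategicBeliefModel
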